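/- Let I, J be m-element subsets of {1,…,n} with I ≠ J, and let i, j ∈ {1,…,n} with i ≠ j. If i ∉ I and j ∉ J, then the elementary transvection t_{I,J}(ξ) in GL_{binom(n,m)}(R) commutes with ∧^m t_{j,i}(ζ) for all ξ, ζ ∈ R. -/

import Mathlib

open Matrix

abbrev Idx (n m : ℕ) := {s : Finset (Fin n) // s.card = m}

def extPow {R : Type*} [CommRing R] (n m : ℕ) (x : Matrix (Fin n) (Fin n) R) :
    Matrix (Idx n m) (Idx n m) R :=
  fun I J => (x.submatrix (⇑(I.1.orderEmbOfFin I.2)) (⇑(J.1.orderEmbOfFin J.2))).det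

/-! A transvection `t_{j,i}(ζ)` agrees with the identity outside row `j` and outside column `i`,
so every `m × m` minor of it taken on rows avoiding `j`, or on columns avoiding `i`, is a minor
of the identity. Hence row `J` and column `I` of `∧^m t_{j,i}(ζ)` are those of the identity,
and a matrix with this property commutes with `e + ξ e_{I,J}`. -/

namespace Matrix

variable {ι : Type*} [DecidableEq ι] [Fintype ι]

theorem commute_single_of_row_eq_of_col_eq {α : Type*} [Semiring α] {X : Matrix ι ι α}
    {i j : ι} (c : α)
    (hrow : ∀ l, X j l = (1 : Matrix ι ι α) j l) (hcol : ∀ k, X k i = (1 : Matrix ι ι α) k i) :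
    Commute (single i j c) X := by
  ext k l
  obtain rfl | hk := eq_or_ne k i
  · obtain rfl | hl := eq_or_ne l j
    · simp [single_mul_apply_same, mul_single_apply_same, hrow, hcol]
    · simp [single_mul_apply_same, mul_single_apply_of_ne (hbj := hl), hrow,
        one_apply_ne hl.symm]
  · obtain rfl | hl := eq_or_ne l j
    · simp [single_mul_apply_of_ne (h := hk), mul_single_apply_same, hcol, one_apply_ne hk]
    · simp [single_mul_apply_of_ne (h := hk), mul_single_apply_of_ne (hbj := hl)]

theorem commute_transvection_of_row_eq_of_col_eq {α : Type*} [CommRing α] {X : Matrix ι ι α}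
    {i j : ι} (c : α)
    (hrow : ∀ l, X j l = (1 : Matrix ι ι α) j l) (hcol : ∀ k, X k i = (1 : Matrix ι ι α) k i) :
    Commute (transvection i j c) X :=
  (Commute.one_left X).add_left (commute_single_of_row_eq_of_col_eq c hrow hcol)

end Matrix

section extPow

variable {R : Type*} [CommRing R] {n m : ℕ}

theorem extPow_one : extPow n m (1 : Matrix (Fin n) (Fin n) R) = 1 := by
  ext P Q
  by_cases h : P = Q
  · subst h
    simp [extPow, submatrix_one _ (P.1.orderEmbOfFin P.2).injective]
  · rw [one_apply_ne h]
    obtain ⟨p, hpP, hpQ⟩ : ∃ p ∈ P.1, p ∉ Q.1 := Finset.not_subset.1 fun hsub =>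
      h (Subtype.ext (Finset.eq_of_subset_of_card_le hsub (by rw [P.2, Q.2])))
    obtain ⟨a, rfl⟩ : p ∈ Set.range (P.1.orderEmbOfFin P.2) := by
      rwa [Finset.range_orderEmbOfFin]
    exact det_eq_zero_of_row_eq_zero a fun b =>
      one_apply_ne fun hab => hpQ (hab ▸ Finset.orderEmbOfFin_mem Q.1 Q.2 b)

theorem extPow_apply_congr_rows {x y : Matrix (Fin n) (Fin n) R} {P : Idx n m} (Q : Idx n m)
    (h : ∀ a ∈ P.1, x a = y a) : extPow n m x P Q = extPow n m y P Q := by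
  unfold extPow
  congr 1
  ext a b
  simp [h _ (Finset.orderEmbOfFin_mem P.1 P.2 a)]

theorem extPow_apply_congr_cols {x y : Matrix (Fin n) (Fin n) R} (P : Idx n m) {Q : Idx n m}
    (h : ∀ b ∈ Q.1, ∀ a, x a b = y a b) : extPow n m x P Q = extPow n m y P Q := by
  unfold extPow
  congr 1
  ext a b
  simp [h _ (Finset.orderEmbOfFin_mem Q.1 Q.2 b)]

theorem extPow_transvection_apply_of_notMem_row {i j : Fin n} (ζ : R) {P : Idx n m}
    (hjP : j ∉ P.1) (Q : Idx n m) :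
    extPow n m (transvection j i ζ) P Q = (1 : Matrix (Idx n m) (Idx n m) R) P Q := by
  rw [← extPow_one, extPow_apply_congr_rows Q]
  intro a ha
  ext b
  simpa using transvection_mul_apply_of_ne j i a b (ne_of_mem_of_not_mem ha hjP) ζ 1

theorem extPow_transvection_apply_of_notMem_col {i j : Fin n} (ζ : R) (P : Idx n m)
    {Q : Idx n m} (hiQ : i ∉ Q.1) :
    extPow n m (transvection j i ζ) P Q = (1 : Matrix (Idx n m) (Idx n m) R) P Q := by
  rw [← extPow_one, extPow_apply_congr_cols P]
  intro b hb a
  simpa using mul_transvection_apply_of_ne j i a b (ne_of_mem_of_not_mem hb hiQ) ζ 1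

end extPow

theorem transvection_commute_extPow_general {R : Type*} [CommRing R] {n m : ℕ}
    (I J : Idx n m) (i j : Fin n)
    (hiI : i ∉ I.1) (hjJ : j ∉ J.1) (ξ ζ : R) :
    Commute (Matrix.transvection I J ξ) (extPow n m (Matrix.transvection j i ζ)) :=
  commute_transvection_of_row_eq_of_col_eq ξ
    (extPow_transvection_apply_of_notMem_row ζ hjJ)
    (fun K => extPow_transvection_apply_of_notMem_col ζ K hiI)

/-- First type of commutation: if `i ∉ I` and `j ∉ J`, then the elementary transvection
`t_{I,J}(ξ)` commutes with `∧^m t_{j,i}(ζ)` for all `ξ, ζ ∈ R`. -/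
theorem transvection_commute_extPow {R : Type*} [CommRing R] {n m : ℕ} (hn : m + 2 ≤ n)
    (I J : Idx n m) (hIJ : I ≠ J) (i j : Fin n) (hij : i ≠ j)
    (hiI : i ∉ I.1) (hjJ : j ∉ J.1) (ξ ζ : R) :
    Commute (Matrix.transvection I J ξ) (extPow n m (Matrix.transvection j i ζ)) :=
  transvection_commute_extPow_general I J i j hiI hjJ ξ ζ
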